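/- Let $F$ be a finite extension of $\mathbb{Q}_p$ with uniformizer $\pi$, residue cardinality $q$, and let $\exp_{\mathrm{LT}}(T) = \sum_{n\geq 1} e_n T^n$ be the exponential series of a Lubin-Tate formal group for $\pi$ (the composition inverse of the logarithm $\log_{\mathrm{LT}}$). Write $\exp_{\mathrm{LT}}(T)^j = \sum_{n \geq j} e_{j,n} T^n$ for $j \geq 1$. Then $\operatorname{val}_\pi(e_{j,n}) \geq -n/(q-1)$ for all $j, n \geq 1$. -/

import Mathlib

/-! With `c = 1 / (q - 1)`, a bound `v(f_t) ≥ a - c t` on the coefficients of a series without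
constant term is multiplicative: `f ^ i` satisfies it with `i a` in place of `a`. Because
`[π](T) ≡ T ^ q` modulo `π` and `q c = c + 1`, induction on `m` gives
`v([π^m]_n) ≥ m + c - c n`; dividing by `π ^ m` yields `v(ℓ_n) ≥ c (1 - n)` for the logarithm.
This bound survives compositional inversion, since `log (exp T) = T` determines `e_n` from the
`ℓ_i` with `i ≥ 2` and coefficients of powers of `exp` that only involve `e_t` with `t < n`.
Hence `v(e_{j,n}) ≥ c (j - n) ≥ -c n`. -/

open PowerSeries

/-- Composition (substitution) of formal power series: `(w.comp' v)(Y) = w(v(Y))`,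
intended for `v` with zero constant coefficient. -/
noncomputable def PowerSeries.comp' {k : Type*} [CommSemiring k] (w v : PowerSeries k) :
    PowerSeries k :=
  PowerSeries.mk fun n => ∑ i ∈ Finset.range (n + 1), coeff i w * coeff n (v ^ i)

/-- `w.iter n` is the `n`-fold composition iterate `w^{∘n}` of `w`, with `w^{∘0} = Y`. -/
noncomputable def PowerSeries.iter {k : Type*} [CommSemiring k] (w : PowerSeries k) :
    ℕ → PowerSeries k
  | 0 => X
  | n + 1 => w.comp' (w.iter n)

namespace PowerSeries

variable {R : Type*} [CommSemiring R]

theorem coeff_comp' (w u : R⟦X⟧) (n : ℕ) :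
    coeff n (w.comp' u) = ∑ i ∈ Finset.range (n + 1), coeff i w * coeff n (u ^ i) :=
  coeff_mk _ _

theorem constantCoeff_comp' (w u : R⟦X⟧) : constantCoeff (w.comp' u) = constantCoeff w := by
  rw [← coeff_zero_eq_constantCoeff_apply, ← coeff_zero_eq_constantCoeff_apply, coeff_comp']
  simp

theorem coeff_one_comp' (w u : R⟦X⟧) : coeff 1 (w.comp' u) = coeff 1 w * coeff 1 u := by
  simp [coeff_comp', Finset.sum_range_succ, coeff_one]

theorem iter_succ (w : R⟦X⟧) (m : ℕ) : w.iter (m + 1) = w.comp' (w.iter m) := rfl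

theorem constantCoeff_iter {w : R⟦X⟧} (hw : constantCoeff w = 0) (m : ℕ) :
    constantCoeff (w.iter m) = 0 := by
  cases m with
  | zero => simp [PowerSeries.iter]
  | succ m => rw [iter_succ, constantCoeff_comp', hw]

theorem coeff_one_iter (w : R⟦X⟧) (m : ℕ) : coeff 1 (w.iter m) = coeff 1 w ^ m := by
  induction m with
  | zero => simp [PowerSeries.iter]
  | succ m ih => rw [iter_succ, coeff_one_comp', ih, pow_succ']

end PowerSeries

namespace AddValuation

section CommRing

variable {R : Type*} [CommRing R] (v : AddValuation R (WithTop ℝ))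

theorem coe_add_le_map_mul {x y : ℝ} {a b : R} (ha : (x : WithTop ℝ) ≤ v a)
    (hb : (y : WithTop ℝ) ≤ v b) : ((x + y : ℝ) : WithTop ℝ) ≤ v (a * b) := by
  rw [map_mul, WithTop.coe_add]
  exact add_le_add ha hb

/-- The coefficient of `X ^ n` in `f ^ i` only involves the `coeff t f` with `t ≤ n + 1 - i`, so
the bound on `f` is only needed below `N`. -/
theorem coe_le_coeff_pow {f : R⟦X⟧} (hf0 : constantCoeff f = 0) {a c : ℝ} {N : ℕ}
    (hf : ∀ t, 0 < t → t < N → ((a - c * t : ℝ) : WithTop ℝ) ≤ v (coeff t f)) (i : ℕ) :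
    ∀ n, n + 1 < N + i → ((i * a - c * n : ℝ) : WithTop ℝ) ≤ v (coeff n (f ^ i)) := by
  induction i with
  | zero =>
    intro n _
    rcases eq_or_ne n 0 with rfl | hn
    · simp
    · simp [coeff_one, hn]
  | succ i ih =>
    intro n hn
    rw [pow_succ', coeff_mul]
    refine v.map_le_sum fun p hp => ?_
    obtain ⟨t, k⟩ := p
    rw [Finset.HasAntidiagonal.mem_antidiagonal] at hp
    rcases Nat.eq_zero_or_pos t with rfl | ht
    · simp [hf0]
    rcases lt_or_ge k i with hk | hk
    · have hX : X ^ i ∣ f ^ i := pow_dvd_pow_of_dvd (X_dvd_iff.mpr hf0) i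
      simp [X_pow_dvd_iff.mp hX k hk]
    convert v.coe_add_le_map_mul (hf t ht (by omega)) (ih k (by omega)) using 2
    rw [← hp]
    push_cast
    ring

theorem coe_le_coeff_iter {q : ℕ} {c : ℝ} (hc : 0 ≤ c) (hqc : 1 ≤ ((q : ℝ) - 1) * c)
    {S : R⟦X⟧} (hS0 : constantCoeff S = 0) (hSint : ∀ i, 0 ≤ v (coeff i S))
    (hSmod : ∀ i, i ≠ q → ((1 : ℝ) : WithTop ℝ) ≤ v (coeff i S)) (m n : ℕ) :
    ((m + c - c * n : ℝ) : WithTop ℝ) ≤ v (coeff n (S.iter m)) := by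
  have hq : (1 : ℝ) ≤ q := by
    rcases Nat.eq_zero_or_pos q with rfl | hq
    · norm_num at hqc
      linarith
    · exact_mod_cast hq
  induction m generalizing n with
  | zero =>
    rcases eq_or_ne n 1 with rfl | hn
    · simp [PowerSeries.iter]
    · simp [PowerSeries.iter, coeff_X, hn]
  | succ m ih =>
    rw [iter_succ, coeff_comp']
    refine v.map_le_sum fun i _ => ?_
    rcases Nat.eq_zero_or_pos i with rfl | hi
    · simp [hS0]
    have hpow := v.coe_le_coeff_pow (constantCoeff_iter hS0 m) (N := n + 1)
      (fun t _ _ => ih t) i n (by omega)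
    have hi' : (1 : ℝ) ≤ i := by exact_mod_cast hi
    have hm : (0 : ℝ) ≤ m := m.cast_nonneg
    by_cases hiq : i = q
    · -- the coefficient of `X ^ q` may be a unit; `q (m + c) ≥ m + c + 1` makes up for it
      subst hiq
      refine le_trans ?_ (v.coe_add_le_map_mul (x := 0) (by exact_mod_cast hSint i) hpow)
      rw [WithTop.coe_le_coe]
      push_cast
      nlinarith [mul_nonneg (sub_nonneg.mpr hq) hm]
    · refine le_trans ?_ (v.coe_add_le_map_mul (hSmod i hiq) hpow)
      rw [WithTop.coe_le_coe]
      push_cast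
      nlinarith [mul_nonneg (sub_nonneg.mpr hi') (add_nonneg hm hc)]

theorem coe_le_coeff_of_comp'_eq_X {c : ℝ} {L E : R⟦X⟧} (hL1 : coeff 1 L = 1)
    (hL : ∀ n : ℕ, ((c - c * n : ℝ) : WithTop ℝ) ≤ v (coeff n L)) (hE0 : constantCoeff E = 0)
    (hLE : L.comp' E = X) (n : ℕ) : ((c - c * n : ℝ) : WithTop ℝ) ≤ v (coeff n E) := by
  induction n using Nat.strong_induction_on with
  | _ n ih =>
  rcases lt_or_ge n 2 with hn | hn
  · interval_cases n
    · simp [hE0]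
    · have hE1 : coeff 1 E = 1 := by
        simpa [coeff_one_comp', hL1] using congrArg (coeff 1) hLE
      simp [hE1]
  have hsum :
      coeff n E = -∑ i ∈ (Finset.range (n + 1)).erase 1, coeff i L * coeff n (E ^ i) := by
    have h := congrArg (coeff n) hLE
    rw [coeff_comp', coeff_X, if_neg (by omega),
      ← Finset.add_sum_erase _ _ (by simp; omega : 1 ∈ Finset.range (n + 1)), hL1, one_mul,
      pow_one] at h
    exact eq_neg_of_add_eq_zero_left h
  rw [hsum, map_neg]
  refine v.map_le_sum fun i hi => ?_
  obtain ⟨hi1, -⟩ := Finset.mem_erase.mp hi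
  rcases Nat.eq_zero_or_pos i with rfl | hi0
  · simp [coeff_one, show n ≠ 0 by omega]
  have hpow := v.coe_le_coeff_pow hE0 (N := n) (fun t _ ht => ih t ht) i n (by omega)
  convert v.coe_add_le_map_mul (hL i) hpow using 2
  ring

end CommRing

section Field

variable {F : Type*} [Field F] (v : AddValuation F (WithTop ℝ))

def ApproximatesIterDiv (S : F⟦X⟧) (π : F) (log : F⟦X⟧) : Prop :=
  ∀ n (M : ℝ), ∃ m, (M : WithTop ℝ) ≤ v (coeff n log - coeff n (S.iter m) * (π ^ m)⁻¹)

theorem map_pow_inv {π : F} (hπ : v π = (1 : ℝ)) (m : ℕ) :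
    v (π ^ m)⁻¹ = ((-m : ℝ) : WithTop ℝ) := by
  rw [map_inv, map_pow, hπ, ← WithTop.coe_nsmul, nsmul_one,
    WithTop.LinearOrderedAddCommGroup.coe_neg]

theorem coe_le_coeff_log {q : ℕ} {c : ℝ} (hc : 0 ≤ c) (hqc : 1 ≤ ((q : ℝ) - 1) * c)
    {S : F⟦X⟧} (hS0 : constantCoeff S = 0) (hSint : ∀ i, 0 ≤ v (coeff i S))
    (hSmod : ∀ i, i ≠ q → ((1 : ℝ) : WithTop ℝ) ≤ v (coeff i S)) {π : F} (hπ : v π = (1 : ℝ))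
    {log : F⟦X⟧} (hlog : v.ApproximatesIterDiv S π log) (n : ℕ) :
    ((c - c * n : ℝ) : WithTop ℝ) ≤ v (coeff n log) := by
  obtain ⟨m, hm⟩ := hlog n (c - c * n)
  have happrox : ((c - c * n : ℝ) : WithTop ℝ) ≤ v (coeff n (S.iter m) * (π ^ m)⁻¹) := by
    convert v.coe_add_le_map_mul (v.coe_le_coeff_iter hc hqc hS0 hSint hSmod m n)
      (v.map_pow_inv hπ m).ge using 2
    ring
  simpa using v.map_le_add hm happrox

theorem coeff_one_eq_one_of_approximatesIterDiv {S log : F⟦X⟧} {π : F} (hπ0 : π ≠ 0)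
    (hS1 : coeff 1 S = π) (hlog : v.ApproximatesIterDiv S π log) : coeff 1 log = 1 := by
  have h : ∀ M : ℝ, (M : WithTop ℝ) ≤ v (coeff 1 log - 1) := fun M => by
    obtain ⟨m, hm⟩ := hlog 1 M
    rwa [coeff_one_iter, hS1, mul_inv_cancel₀ (pow_ne_zero _ hπ0)] at hm
  exact sub_eq_zero.mp (v.top_iff.mp (WithTop.eq_top_iff_forall_ge.mpr h))

end Field

end AddValuation

theorem valexp_general {F : Type*} [Field F] (v : F → WithTop ℝ)
    (hv0 : ∀ x, v x = ⊤ ↔ x = 0)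
    (hvmul : ∀ x y, v (x * y) = v x + v y)
    (hvadd : ∀ x y, min (v x) (v y) ≤ v (x + y))
    (q : ℕ) (hq : 2 ≤ q) (π : F) (hπ : v π = (1 : ℝ))
    (S : PowerSeries F) (hS0 : constantCoeff S = 0) (hS1 : coeff 1 S = π)
    (hSint : ∀ i, 0 ≤ v (coeff i S))
    (hSmod : ∀ i, i ≠ q → ((1 : ℝ) : WithTop ℝ) ≤ v (coeff i S))
    (log exp : PowerSeries F)
    (hlog : ∀ n : ℕ, ∀ M : ℝ, ∃ N : ℕ, ∀ m ≥ N,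
      (M : WithTop ℝ) ≤ v (coeff n log - coeff n (S.iter m) * (π ^ m)⁻¹))
    (hexp0 : constantCoeff exp = 0)
    (hinv1 : log.comp' exp = X) :
    ∀ j n : ℕ, 1 ≤ j → 1 ≤ n →
      ((-(n : ℝ) / ((q : ℝ) - 1) : ℝ) : WithTop ℝ) ≤ v (coeff n (exp ^ j)) := by
  have hv1 : v 1 = 0 := by
    obtain ⟨r, hr⟩ := WithTop.ne_top_iff_exists.mp fun h => one_ne_zero ((hv0 1).1 h)
    have h := hvmul 1 1
    rw [one_mul, ← hr] at h
    rw [← hr]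
    norm_cast at h ⊢
    linarith
  let w : AddValuation F (WithTop ℝ) := .of v ((hv0 0).2 rfl) hv1 hvadd hvmul
  have hq1 : (1 : ℝ) ≤ q - 1 := by
    have : (2 : ℝ) ≤ q := by exact_mod_cast hq
    linarith
  have hc : 0 ≤ ((q : ℝ) - 1)⁻¹ := by positivity
  have hqc : 1 ≤ ((q : ℝ) - 1) * ((q : ℝ) - 1)⁻¹ := (mul_inv_cancel₀ (by positivity)).ge
  have hπ0 : π ≠ 0 := fun h => by simp [h, (hv0 0).2 rfl] at hπ
  have hlog' : w.ApproximatesIterDiv S π log :=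
    fun n M => (hlog n M).imp fun N hN => hN N le_rfl
  have hexp := w.coe_le_coeff_of_comp'_eq_X
    (w.coeff_one_eq_one_of_approximatesIterDiv hπ0 hS1 hlog')
    (w.coe_le_coeff_log hc hqc hS0 hSint hSmod hπ hlog') hexp0 hinv1
  intro j n _ _
  calc ((-(n : ℝ) / ((q : ℝ) - 1) : ℝ) : WithTop ℝ)
      ≤ ((j * ((q : ℝ) - 1)⁻¹ - ((q : ℝ) - 1)⁻¹ * n : ℝ) : WithTop ℝ) := by
        rw [WithTop.coe_le_coe, div_eq_mul_inv]
        linarith [mul_nonneg j.cast_nonneg hc]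
    _ ≤ w (coeff n (exp ^ j)) :=
        w.coe_le_coeff_pow hexp0 (N := n + 1) (fun t _ _ => hexp t) j n (by omega)

/-- valuation bound `val_π(e_{j,n}) ≥ -n/(q-1)` for the coefficients of the
powers `exp_LT^j` of the Lubin-Tate exponential.  The `p`-adic field `F` is modelled by a
field with an additive valuation `v : F → WithTop ℝ`; `S = [π](T)` is a Lubin-Tate series
for `π` (`S ≡ πT mod T²`, `S ≡ T^q mod π`, integral coefficients), `log` is the
coefficientwise limit of `[π^m](T)/π^m`, and `exp` is the composition inverse of `log`. -/
theorem valexp {F : Type*} [Field F] (v : F → WithTop ℝ)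
    (hv0 : ∀ x, v x = ⊤ ↔ x = 0)
    (hvmul : ∀ x y, v (x * y) = v x + v y)
    (hvadd : ∀ x y, min (v x) (v y) ≤ v (x + y))
    (q : ℕ) (hq : 2 ≤ q) (π : F) (hπ : v π = (1 : ℝ))
    (S : PowerSeries F) (hS0 : constantCoeff S = 0) (hS1 : coeff 1 S = π)
    (hSint : ∀ i, 0 ≤ v (coeff i S))
    (hSmod : ∀ i, i ≠ q → ((1 : ℝ) : WithTop ℝ) ≤ v (coeff i S))
    (hSq : ((1 : ℝ) : WithTop ℝ) ≤ v (coeff q S - 1))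
    (log exp : PowerSeries F)
    (hlog : ∀ n : ℕ, ∀ M : ℝ, ∃ N : ℕ, ∀ m ≥ N,
      (M : WithTop ℝ) ≤ v (coeff n log - coeff n (S.iter m) * (π ^ m)⁻¹))
    (hexp0 : constantCoeff exp = 0)
    (hinv1 : log.comp' exp = X) (hinv2 : exp.comp' log = X) :
    ∀ j n : ℕ, 1 ≤ j → 1 ≤ n →
      ((-(n : ℝ) / ((q : ℝ) - 1) : ℝ) : WithTop ℝ) ≤ v (coeff n (exp ^ j)) :=
  valexp_general v hv0 hvmul hvadd q hq π hπ S hS0 hS1 hSint hSmod log exp hlog hexp0 hinv1
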